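/- arXiv:1111.2778 — 3 statements merged into one kernel-verified Lean document; each statement's English description precedes it below -/
import Mathlib

section
/- Let U denote the identity function on [0,1]. Let (tₙ) be a sequence of nonzero reals with tₙ → 0, and let (hₙ) be a sequence of bounded functions on [0,1] converging uniformly to a continuous function h with h(0) = h(1) = 0, such that U + tₙhₙ is a distribution function on [0,1] with (U+tₙhₙ)(0)=0 for each n. Then the quantity Aₙ = sup{x ∈ [0,1] : x + tₙhₙ(x) = 0} satisfies Aₙ = o(tₙ), i.e., Aₙ/tₙ → 0. -/
open Set Filter

/-- If `tₙ → 0` (`tₙ ≠ 0`), `hₙ` are bounded on `[0,1]` and converge uniformly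
to a continuous `h` with `h 0 = h 1 = 0`, and each `U + tₙ hₙ` is a distribution function
on `[0,1]` vanishing at `0`, then `Aₙ = sup{x ∈ [0,1] : x + tₙ hₙ(x) = 0}` is `o(tₙ)`. -/
theorem generalized_inverse_at_zero_little_o
    (t : ℕ → ℝ) (h : ℕ → ℝ → ℝ) (hlim : ℝ → ℝ)
    (ht0 : ∀ n, t n ≠ 0) (htt : Tendsto t atTop (nhds 0))
    (hbdd : ∀ n, ∃ M, ∀ x ∈ Icc (0:ℝ) 1, |h n x| ≤ M)
    (hunif : TendstoUniformlyOn h hlim atTop (Icc 0 1))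
    (hcont : ContinuousOn hlim (Icc 0 1)) (hl0 : hlim 0 = 0) (hl1 : hlim 1 = 0)
    (hdf : ∀ n,
      (∀ x ∈ Icc (0:ℝ) 1, ∀ y ∈ Icc (0:ℝ) 1, x ≤ y → x + t n * h n x ≤ y + t n * h n y) ∧
      (∀ x ∈ Ico (0:ℝ) 1, ContinuousWithinAt (fun y => y + t n * h n y) (Ici x) x) ∧
      (∀ x ∈ Icc (0:ℝ) 1, x + t n * h n x ∈ Icc (0:ℝ) 1) ∧
      ((0:ℝ) + t n * h n 0 = 0) ∧ ((1:ℝ) + t n * h n 1 = 1))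
    (A : ℕ → ℝ)
    (hA : ∀ n, A n = sSup {x ∈ Icc (0:ℝ) 1 | x + t n * h n x = 0}) :
    Tendsto (fun n => A n / t n) atTop (nhds 0) := by

  rw [Metric.tendsto_atTop]
  intro ε hε
  obtain ⟨C, hC⟩ := isCompact_Icc.exists_bound_of_continuousOn hcont
  have hC0 : 0 ≤ C := le_trans (norm_nonneg _) (hC 0 (by norm_num))
  have h0c := hcont 0 (by norm_num : (0:ℝ) ∈ Icc (0:ℝ) 1)
  rw [Metric.continuousWithinAt_iff] at h0c
  obtain ⟨δ, hδpos, hδ⟩ := h0c (ε/4) (by linarith)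
  have hu := Metric.tendstoUniformlyOn_iff.mp hunif (ε/4) (by linarith)
  have htsmall : ∀ᶠ n in atTop, |t n| < δ / (C + ε/4 + 1) := by
    obtain ⟨N, hN⟩ := Metric.tendsto_atTop.mp htt (δ / (C + ε/4 + 1))
      (div_pos hδpos (by linarith))
    refine eventually_atTop.mpr ⟨N, fun n hn => ?_⟩
    have := hN n hn
    rwa [Real.dist_eq, sub_zero] at this
  rw [eventually_atTop] at hu htsmall
  obtain ⟨N1, hN1⟩ := hu
  obtain ⟨N2, hN2⟩ := htsmall
  refine ⟨max N1 N2, fun n hn => ?_⟩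
  have hun := hN1 n (le_trans (le_max_left _ _) hn)
  have htn := hN2 n (le_trans (le_max_right _ _) hn)
  have hden : (0:ℝ) < C + ε/4 + 1 := by linarith
  have htpos : 0 < |t n| := abs_pos.mpr (ht0 n)
  set S := {x ∈ Icc (0:ℝ) 1 | x + t n * h n x = 0} with hSdef
  have hS0 : (0:ℝ) ∈ S := ⟨by norm_num, (hdf n).2.2.2.1⟩
  have hbd : ∀ x ∈ S, x ≤ |t n| * (ε/2) := by
    rintro x ⟨hx1, hx2⟩
    have hxabs : |x| = |t n| * |h n x| := by
      have hx3 : x = -(t n * h n x) := by linarith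
      have := congrArg abs hx3
      rwa [abs_neg, abs_mul] at this
    have hh1 : |h n x| ≤ C + ε/4 := by
      have h1 := hun x hx1
      rw [Real.dist_eq] at h1
      have h2 := hC x hx1
      rw [Real.norm_eq_abs] at h2
      have h3 := abs_sub_abs_le_abs_sub (h n x) (hlim x)
      rw [abs_sub_comm] at h3
      linarith
    have hxlt : |x| < δ := by
      have h4 : |t n| * (C + ε/4 + 1) < δ := by
        rw [lt_div_iff₀ hden] at htn
        exact htn
      have h5 : |t n| * |h n x| ≤ |t n| * (C + ε/4) :=
        mul_le_mul_of_nonneg_left hh1 (le_of_lt htpos)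
      nlinarith
    have hmem : x ∈ Icc (0:ℝ) 1 := hx1
    have h6 := hδ hmem (by rwa [Real.dist_eq, sub_zero])
    rw [Real.dist_eq, hl0, sub_zero] at h6
    have h7 := hun x hx1
    rw [Real.dist_eq] at h7
    have h8 : |h n x| < ε/2 := by
      have h9 := abs_sub_abs_le_abs_sub (h n x) (hlim x)
      rw [abs_sub_comm] at h9
      linarith
    have h10 : |x| ≤ |t n| * (ε/2) := by
      rw [hxabs]
      exact mul_le_mul_of_nonneg_left (le_of_lt h8) (le_of_lt htpos)
    exact le_trans (le_abs_self x) h10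
  have hAle : A n ≤ |t n| * (ε/2) := by
    rw [hA n]
    exact csSup_le ⟨0, hS0⟩ hbd
  have hAge : 0 ≤ A n := by
    rw [hA n]
    exact le_csSup ⟨|t n| * (ε/2), hbd⟩ hS0
  rw [Real.dist_eq, sub_zero, abs_div, abs_of_nonneg hAge, div_lt_iff₀ htpos]
  calc A n ≤ |t n| * (ε/2) := hAle
    _ < ε * |t n| := by nlinarith
end

section
/- Let U denote the identity on [0,1], tₙ → 0 with tₙ ≠ 0, and hₙ bounded functions on [0,1] converging uniformly to a continuous h with h(0)=h(1)=0, such that each Fₙ = U + tₙhₙ is a distribution function on [0,1] with Fₙ(0)=0. Then sup_{x∈[0,1]} | (Fₙ⁻(x) − x)/tₙ + h(x) | → 0 as n → ∞, where Fₙ⁻ denotes the generalized inverse. -/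
open Set Filter

/-!
Near any level `p`, on a window of width `O(tₙ)`, the function `Fₙ = id + tₙ hₙ` differs from the
translation `y ↦ y + tₙ h(p)` by `o(tₙ)` uniformly in `p`: this is where uniform convergence
`hₙ → h` and uniform continuity of `h` enter. A generalized inverse of a function that is
`η`-close to a translation `y ↦ y + c` near the relevant point is `η`-close to `p - c`, so
`Fₙ⁻(p) = p - tₙ h(p) + o(tₙ)` uniformly. At `p = 0` the convention `F⁻(0) = sup F⁻¹{0}` is
controlled directly, using `h(0) = 0`.
-/

section GeneralizedInverse

variable {F : ℝ → ℝ} {a b p : ℝ}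

lemma apply_lt_of_lt_sInf {y : ℝ} (hy : y ∈ Icc a b) (hlt : y < sInf {x ∈ Icc a b | p ≤ F x}) :
    F y < p :=
  not_le.1 fun hle => hlt.not_ge (csInf_le (bddBelow_Icc.mono fun _ hx => hx.1) ⟨hy, hle⟩)

lemma sInf_mem_Icc_of_le_apply (hab : a ≤ b) (hpb : p ≤ F b) :
    sInf {x ∈ Icc a b | p ≤ F x} ∈ Icc a b :=
  ⟨le_csInf ⟨b, ⟨hab, le_rfl⟩, hpb⟩ fun _ hx => hx.1.1,
    csInf_le (bddBelow_Icc.mono fun _ hx => hx.1) ⟨⟨hab, le_rfl⟩, hpb⟩⟩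

lemma le_apply_sInf (hab : a ≤ b) (hmono : MonotoneOn F (Icc a b))
    (hrc : ∀ x ∈ Ico a b, ContinuousWithinAt F (Ici x) x) (hpb : p ≤ F b) :
    p ≤ F (sInf {x ∈ Icc a b | p ≤ F x}) := by
  set S := {x ∈ Icc a b | p ≤ F x}
  obtain ⟨haS, hSb⟩ := sInf_mem_Icc_of_le_apply hab hpb
  rcases hSb.eq_or_lt with heq | hlt
  · rwa [heq]
  refine ge_of_tendsto ((hrc _ ⟨haS, hlt⟩).tendsto.mono_left
    (nhdsWithin_mono _ Ioi_subset_Ici_self)) ?_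
  filter_upwards [Ioo_mem_nhdsGT hlt] with y hy
  obtain ⟨s, hsS, hsy⟩ := exists_lt_of_csInf_lt (s := S) ⟨b, ⟨hab, le_rfl⟩, hpb⟩ hy.1
  exact hsS.2.trans (hmono hsS.1 ⟨haS.trans hy.1.le, hy.2.le⟩ hsy.le)

end GeneralizedInverse

lemma abs_sub_sub_le_of_near_translation {F : ℝ → ℝ} {p x c η r : ℝ} (hr : 0 < r)
    (hx : x ∈ Ioc (0:ℝ) 1) (hpx : p ≤ F x) (hbelow : ∀ y ∈ Icc (0:ℝ) 1, y < x → F y < p)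
    (hnear : ∀ y ∈ Icc (0:ℝ) 1, |y - x| ≤ r → |F y - (y + c)| ≤ η) :
    |x - (p - c)| ≤ η := by
  have hFx := abs_le.1 (hnear x ⟨hx.1.le, hx.2⟩ (by simp [hr.le]))
  refine abs_le.2 ⟨by linarith [hFx.2], ?_⟩
  by_contra! hfar
  set y := max (max (p - c + η) 0) (x - r)
  have hyx : y < x := max_lt (max_lt (by linarith) hx.1) (by linarith)
  have hy : y ∈ Icc (0:ℝ) 1 := ⟨(le_max_right _ _).trans (le_max_left _ _), hyx.le.trans hx.2⟩
  have hFy := abs_le.1 (hnear y hy (by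
    rw [abs_sub_comm, abs_of_pos (sub_pos.2 hyx)]
    linarith [le_max_right (max (p - c + η) 0) (x - r)]))
  have hy_ge : p - c + η ≤ y := (le_max_left _ _).trans (le_max_left _ _)
  linarith [hbelow y hy hyx]

section Estimate

variable {t ε δ : ℝ} {k φ : ℝ → ℝ}

lemma abs_sInf_sub_div_add_le (ht : t ≠ 0) (hδ : 0 < δ)
    (hclose : ∀ x ∈ Icc (0:ℝ) 1, ∀ y ∈ Icc (0:ℝ) 1, |x - y| ≤ δ → |k x - φ y| ≤ ε)
    (hsmall : ∀ x ∈ Icc (0:ℝ) 1, |t * k x| ≤ δ / 2)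
    (hmono : MonotoneOn (fun x => x + t * k x) (Icc 0 1))
    (hrc : ∀ x ∈ Ico (0:ℝ) 1, ContinuousWithinAt (fun y => y + t * k y) (Ici x) x)
    (h0 : (0:ℝ) + t * k 0 = 0) (h1 : (1:ℝ) + t * k 1 = 1) {p : ℝ} (hp : p ∈ Ioc (0:ℝ) 1) :
    |(sInf {x ∈ Icc (0:ℝ) 1 | p ≤ x + t * k x} - p) / t + φ p| ≤ ε := by
  set x := sInf {x ∈ Icc (0:ℝ) 1 | p ≤ x + t * k x}
  have hp1 : p ≤ 1 + t * k 1 := by rw [h1]; exact hp.2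
  have hpx : p ≤ x + t * k x := le_apply_sInf zero_le_one hmono hrc hp1
  obtain ⟨hx0, hx1⟩ : x ∈ Icc (0:ℝ) 1 := sInf_mem_Icc_of_le_apply zero_le_one hp1
  have hxpos : 0 < x := hx0.lt_of_ne fun h => by rw [← h, h0] at hpx; linarith [hp.1]
  have hbelow : ∀ y ∈ Icc (0:ℝ) 1, y < x → y + t * k y < p := fun y hy => apply_lt_of_lt_sInf hy
  -- the coarse bound `|x - p| ≤ δ / 2` puts the `δ / 2`-window around `x` in the range of `hclose`
  have hxp : |x - p| ≤ δ / 2 := by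
    simpa using abs_sub_sub_le_of_near_translation (c := 0) (r := 1) one_pos ⟨hxpos, hx1⟩ hpx
      hbelow fun y hy _ => by simpa using hsmall y hy
  have hx_near : |x - (p - t * φ p)| ≤ |t| * ε :=
    abs_sub_sub_le_of_near_translation (half_pos hδ) ⟨hxpos, hx1⟩ hpx hbelow fun y hy hyx => by
      rw [show y + t * k y - (y + t * φ p) = t * (k y - φ p) by ring, abs_mul]
      refine mul_le_mul_of_nonneg_left (hclose y hy p ⟨hp.1.le, hp.2⟩ ?_) (abs_nonneg t)
      calc |y - p| = |(y - x) + (x - p)| := by ring_nf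
        _ ≤ |y - x| + |x - p| := abs_add_le _ _
        _ ≤ δ := by linarith
  rw [show (x - p) / t + φ p = (x - (p - t * φ p)) / t by field_simp; ring, abs_div,
    div_le_iff₀ (abs_pos.2 ht)]
  linarith

lemma abs_sSup_div_add_le (ht : t ≠ 0)
    (hclose : ∀ x ∈ Icc (0:ℝ) 1, ∀ y ∈ Icc (0:ℝ) 1, |x - y| ≤ δ → |k x - φ y| ≤ ε)
    (hsmall : ∀ x ∈ Icc (0:ℝ) 1, |t * k x| ≤ δ / 2) (hφ0 : φ 0 = 0)
    (h0 : (0:ℝ) + t * k 0 = 0) :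
    |(sSup {x ∈ Icc (0:ℝ) 1 | x + t * k x = 0} - 0) / t + φ 0| ≤ ε := by
  have hδ : 0 ≤ δ := by linarith [abs_nonneg (t * k 0), hsmall 0 ⟨le_rfl, zero_le_one⟩]
  have h0S : (0:ℝ) ∈ {x ∈ Icc (0:ℝ) 1 | x + t * k x = 0} := ⟨⟨le_rfl, zero_le_one⟩, h0⟩
  have hnonneg := le_csSup ⟨1, fun _ hx => hx.1.2⟩ h0S
  have hle : sSup {x ∈ Icc (0:ℝ) 1 | x + t * k x = 0} ≤ |t| * ε := by
    refine csSup_le ⟨0, h0S⟩ fun s ⟨hs, hFs⟩ => ?_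
    have hst : s = -(t * k s) := by linarith
    have hks : |k s| ≤ ε := by
      simpa [hφ0] using hclose s hs 0 ⟨le_rfl, zero_le_one⟩ (by
        rw [sub_zero, hst, abs_neg]; linarith [hsmall s hs])
    calc s = -(t * k s) := hst
      _ ≤ |t * k s| := neg_le_abs _
      _ ≤ |t| * ε := by rw [abs_mul]; exact mul_le_mul_of_nonneg_left hks (abs_nonneg t)
  rw [hφ0, sub_zero, add_zero, abs_div, div_le_iff₀ (abs_pos.2 ht), abs_of_nonneg hnonneg]
  linarith

end Estimate

lemma TendstoUniformlyOn.exists_eventually_abs_sub_le {ι : Type*} {l : Filter ι}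
    {h : ι → ℝ → ℝ} {φ : ℝ → ℝ} {s : Set ℝ} (hunif : TendstoUniformlyOn h φ l s)
    (hφ : UniformContinuousOn φ s) {ε : ℝ} (hε : 0 < ε) :
    ∃ δ > 0, ∀ᶠ n in l, ∀ x ∈ s, ∀ y ∈ s, |x - y| ≤ δ → |h n x - φ y| ≤ ε := by
  obtain ⟨δ, hδ, hφδ⟩ := Metric.uniformContinuousOn_iff.1 hφ (ε / 2) (half_pos hε)
  refine ⟨δ / 2, half_pos hδ, ?_⟩
  filter_upwards [Metric.tendstoUniformlyOn_iff.1 hunif (ε / 2) (half_pos hε)]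
    with n hn x hx y hy hxy
  have hnx : |h n x - φ x| < ε / 2 := by rw [abs_sub_comm, ← Real.dist_eq]; exact hn x hx
  have hxy' : |φ x - φ y| < ε / 2 := hφδ x hx y hy (by rw [Real.dist_eq]; linarith)
  calc |h n x - φ y| = |(h n x - φ x) + (φ x - φ y)| := by ring_nf
    _ ≤ |h n x - φ x| + |φ x - φ y| := abs_add_le _ _
    _ ≤ ε := by linarith

theorem generalized_inverse_hadamard_at_identity_general
    (t : ℕ → ℝ) (h : ℕ → ℝ → ℝ) (hlim : ℝ → ℝ)
    (ht0 : ∀ n, t n ≠ 0) (htt : Tendsto t atTop (nhds 0))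
    (hunif : TendstoUniformlyOn h hlim atTop (Icc 0 1))
    (hcont : ContinuousOn hlim (Icc 0 1)) (hl0 : hlim 0 = 0)
    (hdf : ∀ n,
      (∀ x ∈ Icc (0:ℝ) 1, ∀ y ∈ Icc (0:ℝ) 1, x ≤ y → x + t n * h n x ≤ y + t n * h n y) ∧
      (∀ x ∈ Ico (0:ℝ) 1, ContinuousWithinAt (fun y => y + t n * h n y) (Ici x) x) ∧
      (∀ x ∈ Icc (0:ℝ) 1, x + t n * h n x ∈ Icc (0:ℝ) 1) ∧
      ((0:ℝ) + t n * h n 0 = 0) ∧ ((1:ℝ) + t n * h n 1 = 1))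
    (Finv : ℕ → ℝ → ℝ)
    (hFinv : ∀ n, ∀ p ∈ Ioc (0:ℝ) 1,
      Finv n p = sInf {x ∈ Icc (0:ℝ) 1 | p ≤ x + t n * h n x})
    (hFinv0 : ∀ n, Finv n 0 = sSup {x ∈ Icc (0:ℝ) 1 | x + t n * h n x = 0}) :
    Tendsto (fun n => ⨆ x : Icc (0:ℝ) 1, |(Finv n x.1 - x.1) / t n + hlim x.1|)
      atTop (nhds 0) := by
  refine Metric.tendsto_nhds.2 fun ε hε => ?_
  obtain ⟨K, hK⟩ := isCompact_Icc.exists_bound_of_continuousOn hcont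
  obtain ⟨δ, hδ, hclose⟩ := hunif.exists_eventually_abs_sub_le
    (isCompact_Icc.uniformContinuousOn_of_continuous hcont) (half_pos hε)
  have hsmall : ∀ᶠ n in atTop, |t n| * (K + ε / 2) < δ / 2 := by
    have : Tendsto (fun n => |t n| * (K + ε / 2)) atTop (nhds 0) := by
      simpa using htt.abs.mul_const (K + ε / 2)
    exact this.eventually_lt_const (half_pos hδ)
  filter_upwards [hclose, hsmall] with n hnear htn
  obtain ⟨hmono, hrc, -, h0, h1⟩ := hdf n
  have hbound : ∀ x ∈ Icc (0:ℝ) 1, |t n * h n x| ≤ δ / 2 := fun x hx => by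
    have hhx : |h n x| ≤ K + ε / 2 := by
      have hKx : |hlim x| ≤ K := by simpa only [Real.norm_eq_abs] using hK x hx
      linarith [abs_sub_abs_le_abs_sub (h n x) (hlim x), hnear x hx x hx (by simpa using hδ.le)]
    rw [abs_mul]
    exact (mul_le_mul_of_nonneg_left hhx (abs_nonneg _)).trans htn.le
  have hpt : ∀ p ∈ Icc (0:ℝ) 1, |(Finv n p - p) / t n + hlim p| ≤ ε / 2 := by
    rintro p ⟨hp0, hp1⟩
    rcases hp0.eq_or_lt with rfl | hpos
    · rw [hFinv0]
      exact abs_sSup_div_add_le (ht0 n) hnear hbound hl0 h0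
    · rw [hFinv n p ⟨hpos, hp1⟩]
      exact abs_sInf_sub_div_add_le (ht0 n) hδ hnear hbound hmono hrc h0 h1 ⟨hpos, hp1⟩
  rw [Real.dist_eq, sub_zero, abs_of_nonneg (Real.iSup_nonneg fun _ => abs_nonneg _)]
  exact (Real.iSup_le (fun x : Icc (0:ℝ) 1 => hpt x.1 x.2) (half_pos hε).le).trans_lt (half_lt_self hε)

/-- Hadamard differentiability of `F ↦ F⁻` at the identity, tangentially to
continuous functions vanishing at `0` and `1`: with `Fₙ = id + tₙ hₙ` distribution functions
on `[0,1]`, `sup_{x ∈ [0,1]} |(Fₙ⁻(x) − x)/tₙ + h(x)| → 0`. -/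
theorem generalized_inverse_hadamard_at_identity
    (t : ℕ → ℝ) (h : ℕ → ℝ → ℝ) (hlim : ℝ → ℝ)
    (ht0 : ∀ n, t n ≠ 0) (htt : Tendsto t atTop (nhds 0))
    (hbdd : ∀ n, ∃ M, ∀ x ∈ Icc (0:ℝ) 1, |h n x| ≤ M)
    (hunif : TendstoUniformlyOn h hlim atTop (Icc 0 1))
    (hcont : ContinuousOn hlim (Icc 0 1)) (hl0 : hlim 0 = 0) (hl1 : hlim 1 = 0)
    (hdf : ∀ n,
      (∀ x ∈ Icc (0:ℝ) 1, ∀ y ∈ Icc (0:ℝ) 1, x ≤ y → x + t n * h n x ≤ y + t n * h n y) ∧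
      (∀ x ∈ Ico (0:ℝ) 1, ContinuousWithinAt (fun y => y + t n * h n y) (Ici x) x) ∧
      (∀ x ∈ Icc (0:ℝ) 1, x + t n * h n x ∈ Icc (0:ℝ) 1) ∧
      ((0:ℝ) + t n * h n 0 = 0) ∧ ((1:ℝ) + t n * h n 1 = 1))
    (Finv : ℕ → ℝ → ℝ)
    (hFinv : ∀ n, ∀ p ∈ Ioc (0:ℝ) 1,
      Finv n p = sInf {x ∈ Icc (0:ℝ) 1 | p ≤ x + t n * h n x})
    (hFinv0 : ∀ n, Finv n 0 = sSup {x ∈ Icc (0:ℝ) 1 | x + t n * h n x = 0}) :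
    Tendsto (fun n => ⨆ x : Icc (0:ℝ) 1, |(Finv n x.1 - x.1) / t n + hlim x.1|)
      atTop (nhds 0) :=
  generalized_inverse_hadamard_at_identity_general t h hlim ht0 htt hunif hcont hl0 hdf Finv hFinv
    hFinv0
end

section
/- Let C be a d-dimensional copula whose partial derivatives ∂_p C exist and are continuous on U_p = {u ∈ [0,1]^d : u_p ∈ (0,1)} for each p. Extend ∂_p C by 0 to the set {u : u_p ∈ {0,1}}. Let α : [0,1]^d → ℝ be continuous with α(1,...,1) = 0 and α(u) = 0 whenever some coordinate of u equals 0. Then the function u ↦ α(u) − Σ_{p=1}^d ∂_pC(u) · α(u^{(p)}), where u^{(p)} = (1,...,1,u_p,1,...,1), is continuous on [0,1]^d. -/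
/-! A copula is monotone and `1`-Lipschitz in each coordinate on `[0,1]`: raising `u_p` from `t`
to `s` adds at most the mass of the slab `t < x_p ≤ s`, which is `s - t` by uniformity of the
marginal. Hence `|∂_p C| ≤ 1` on the cube. Where `u_p ∈ (0,1)` the summand `∂_p C(u) α(u^{(p)})`
is continuous by assumption; where `u_p ∈ {0,1}` the factor `α(u^{(p)})` vanishes, and a bounded
function times one tending to `0` tends to `0`. -/

open MeasureTheory Set

/-- A `d`-dimensional copula. -/
def IsCopula (d : ℕ) (C : (Fin d → ℝ) → ℝ) : Prop :=
  ∃ μ : Measure (Fin d → ℝ), IsProbabilityMeasure μ ∧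
    (∀ p : Fin d, ∀ t ∈ Icc (0:ℝ) 1, μ {x | x p ≤ t} = ENNReal.ofReal t) ∧
    (∀ u, C u = (μ {x | ∀ p, x p ≤ u p}).toReal)

/-- The unit cube `[0,1]^d`. -/
def cube (d : ℕ) : Set (Fin d → ℝ) := Set.univ.pi fun _ => Icc 0 1

/-- `u^{(p)}`: all coordinates `1` except the `p`-th, which is `u p`. -/
def margVec {d : ℕ} (p : Fin d) (s : ℝ) : Fin d → ℝ := Function.update (fun _ => 1) p s

open Topology Filter Function

theorem ContinuousOn.mul_of_bounded_of_continuousWithinAt {X R : Type*} [TopologicalSpace X]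
    [NonUnitalSeminormedRing R] {f g : X → R} {s : Set X} {M : ℝ}
    (hf_bdd : ∀ x ∈ s, ‖f x‖ ≤ M) (hf : ∀ x ∈ s, g x ≠ 0 → ContinuousWithinAt f s x)
    (hg : ContinuousOn g s) :
    ContinuousOn (fun x => f x * g x) s := by
  intro x hx
  by_cases hgx : g x = 0
  · have hg0 : Tendsto g (𝓝[s] x) (𝓝 0) := hgx ▸ hg x hx
    have hf_bdd' : IsBoundedUnder (· ≤ ·) (𝓝[s] x) fun y => ‖f y‖ :=
      isBoundedUnder_of_eventually_le (eventually_nhdsWithin_of_forall hf_bdd)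
    simpa [ContinuousWithinAt, hgx] using isBoundedUnder_le_mul_tendsto_zero hf_bdd' hg0
  · exact (hf x hx hgx).mul (hg x hx)

theorem Iic_update_subset_union {ι : Type*} [DecidableEq ι] (u : ι → ℝ) (p : ι) (s t : ℝ) :
    Iic (update u p s) ⊆ Iic (update u p t) ∪ ({x | x p ≤ s} \ {x | x p ≤ t}) := by
  intro x hx
  rw [mem_Iic, le_update_iff] at hx
  by_cases hxt : x p ≤ t
  · exact Or.inl (le_update_iff.2 ⟨hxt, hx.2⟩)
  · exact Or.inr ⟨hx.1, hxt⟩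

namespace IsCopula

variable {d : ℕ} {C : (Fin d → ℝ) → ℝ}

theorem exists_measure (hC : IsCopula d C) :
    ∃ μ : Measure (Fin d → ℝ), IsProbabilityMeasure μ ∧
      (∀ p : Fin d, ∀ t ∈ Icc (0:ℝ) 1, μ.real {x | x p ≤ t} = t) ∧
      ∀ u, C u = μ.real (Iic u) := by
  obtain ⟨μ, hμ, hmarg, hCμ⟩ := hC
  refine ⟨μ, hμ, fun p t ht => ?_, hCμ⟩
  rw [measureReal_def, hmarg p t ht, ENNReal.toReal_ofReal ht.1]

theorem monotone_update (hC : IsCopula d C) (u : Fin d → ℝ) (p : Fin d) :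
    Monotone fun s => C (update u p s) := by
  obtain ⟨μ, _, _, hCμ⟩ := hC.exists_measure
  intro s t hst
  simp only [hCμ]
  exact measureReal_mono (Iic_subset_Iic.2 (update_mono hst))

theorem update_le_add (hC : IsCopula d C) (u : Fin d → ℝ) (p : Fin d) {s t : ℝ}
    (ht : 0 ≤ t) (hts : t ≤ s) (hs : s ≤ 1) :
    C (update u p s) ≤ C (update u p t) + (s - t) := by
  obtain ⟨μ, _, hmarg, hCμ⟩ := hC.exists_measure
  have hsub : {x : Fin d → ℝ | x p ≤ t} ⊆ {x | x p ≤ s} := fun x hx => le_trans hx hts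
  have hmeas : MeasurableSet {x : Fin d → ℝ | x p ≤ t} :=
    measurableSet_le (measurable_pi_apply p) measurable_const
  calc C (update u p s)
      ≤ μ.real (Iic (update u p t) ∪ ({x | x p ≤ s} \ {x | x p ≤ t})) := by
        rw [hCμ]; exact measureReal_mono (Iic_update_subset_union u p s t)
    _ ≤ μ.real (Iic (update u p t)) + μ.real ({x | x p ≤ s} \ {x | x p ≤ t}) :=
        measureReal_union_le _ _
    _ = C (update u p t) + (s - t) := by
        rw [hCμ, measureReal_sdiff hsub hmeas,
          hmarg p s ⟨ht.trans hts, hs⟩, hmarg p t ⟨ht, hts.trans hs⟩]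

theorem lipschitzOnWith_update (hC : IsCopula d C) (u : Fin d → ℝ) (p : Fin d) :
    LipschitzOnWith 1 (fun s => C (update u p s)) (Icc 0 1) :=
  LipschitzOnWith.of_le_add fun s hs t ht => by
    rcases le_total s t with hst | hts
    · linarith [hC.monotone_update u p hst, dist_nonneg (x := s) (y := t)]
    · rw [Real.dist_eq, abs_of_nonneg (sub_nonneg.2 hts)]
      exact hC.update_le_add u p ht.1 hts hs.2

theorem norm_le_one_of_hasDerivWithinAt (hC : IsCopula d C) {u : Fin d → ℝ} {p : Fin d} {c : ℝ}
    (hup : u p ∈ Ioo 0 1)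
    (hc : HasDerivWithinAt (fun s => C (update u p s)) c (Icc 0 1) (u p)) : ‖c‖ ≤ 1 := by
  have hnhds : Icc (0:ℝ) 1 ∈ 𝓝 (u p) := Icc_mem_nhds hup.1 hup.2
  simpa using (hc.hasDerivAt hnhds).le_of_lipschitzOn hnhds (hC.lipschitzOnWith_update u p)

end IsCopula

theorem continuous_margVec {d : ℕ} (p : Fin d) : Continuous (margVec p) :=
  continuous_const.update p continuous_id

theorem margVec_mem_cube {d : ℕ} (p : Fin d) {s : ℝ} (hs : s ∈ Icc 0 1) : margVec p s ∈ cube d := by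
  intro q _
  rcases eq_or_ne q p with rfl | hq
  · simpa [margVec] using hs
  · simp [margVec, update_of_ne hq]

theorem margVec_one {d : ℕ} (p : Fin d) : margVec p 1 = fun _ => 1 :=
  update_eq_self p _

theorem margVec_zero_apply {d : ℕ} (p : Fin d) : margVec p 0 p = 0 :=
  update_self p 0 _

theorem eq_zero_or_eq_one_of_mem_cube {d : ℕ} {u : Fin d → ℝ} (hu : u ∈ cube d) {p : Fin d}
    (hup : u p ∉ Ioo 0 1) : u p = 0 ∨ u p = 1 := by
  have : u p ∈ Icc (0:ℝ) 1 \ Ioo 0 1 := ⟨hu p (mem_univ p), hup⟩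
  rwa [Icc_sdiff_Ioo_same zero_le_one, mem_insert_iff, mem_singleton_iff] at this

/-- Under Segers' condition, the candidate limit
`u ↦ α(u) − Σ_p ∂_pC(u)·α(u^{(p)})` is continuous on `[0,1]^d`. -/
theorem candidate_limit_continuous
    (d : ℕ) (C : (Fin d → ℝ) → ℝ) (hC : IsCopula d C)
    (D : Fin d → (Fin d → ℝ) → ℝ)
    (hDderiv : ∀ p : Fin d, ∀ u ∈ cube d, u p ∈ Ioo (0:ℝ) 1 →
      HasDerivWithinAt (fun s => C (Function.update u p s)) (D p u) (Icc (0:ℝ) 1) (u p))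
    (hDcont : ∀ p : Fin d, ContinuousOn (D p) {u | u ∈ cube d ∧ u p ∈ Ioo (0:ℝ) 1})
    (hDbdry : ∀ p : Fin d, ∀ u, (u p = 0 ∨ u p = 1) → D p u = 0)
    (α : (Fin d → ℝ) → ℝ)
    (hαcont : ContinuousOn α (cube d))
    (hα1 : α (fun _ => 1) = 0)
    (hα0 : ∀ u, (∃ p, u p = 0) → α u = 0) :
    ContinuousOn (fun u => α u - ∑ p, D p u * α (margVec p (u p))) (cube d) := by
  have hD_bdd : ∀ p, ∀ u ∈ cube d, ‖D p u‖ ≤ 1 := fun p u hu => by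
    by_cases hup : u p ∈ Ioo 0 1
    · exact hC.norm_le_one_of_hasDerivWithinAt hup (hDderiv p u hu hup)
    · simp [hDbdry p u (eq_zero_or_eq_one_of_mem_cube hu hup)]
  have hD_cont : ∀ p, ∀ u ∈ cube d, u p ∈ Ioo 0 1 → ContinuousWithinAt (D p) (cube d) u :=
    fun p u hu hup => (continuousWithinAt_inter
      ((isOpen_Ioo.preimage (continuous_apply p)).mem_nhds hup)).1 (hDcont p u ⟨hu, hup⟩)
  have hαmarg_cont : ∀ p, ContinuousOn (fun u => α (margVec p (u p))) (cube d) := fun p =>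
    hαcont.comp ((continuous_margVec p).comp (continuous_apply p)).continuousOn
      fun u hu => margVec_mem_cube p (hu p (mem_univ p))
  have hαmarg_ne : ∀ p, ∀ u ∈ cube d, α (margVec p (u p)) ≠ 0 → u p ∈ Ioo 0 1 :=
    fun p u hu hne => by
      by_contra hup
      rcases eq_zero_or_eq_one_of_mem_cube hu hup with h | h <;> rw [h] at hne
      · exact hne (hα0 _ ⟨p, margVec_zero_apply p⟩)
      · exact hne (margVec_one p ▸ hα1)
  exact hαcont.sub <| continuousOn_finsetSum _ fun p _ =>
    ContinuousOn.mul_of_bounded_of_continuousWithinAt (hD_bdd p)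
      (fun u hu hne => hD_cont p u hu (hαmarg_ne p u hu hne)) (hαmarg_cont p)
end
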